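/- Proposition 12 (L1/total-variation uncertainty class): Let d > 0 and let h0 ∈ A be a point with μ0({h0}) = 0. Then (i) every probability measure μ with D(μ0‖μ) ≤ d²/2 satisfies 2·TV(μ, μ0) ≤ d, and likewise every μ with D(μ‖μ0) ≤ d²/2 satisfies 2·TV(μ, μ0) ≤ d (Pinsker's inequality); consequently (ii) P₁ := sup{ μ(A) : 2·TV(μ,μ0) ≤ d } ≥ max( sup{ μ(A) : D(μ‖μ0) ≤ d²/2 }, sup{ μ(A) : D(μ0‖μ) ≤ d²/2 } ), and (iii) P₁ ≥ 1 − e^{−d²/2} + e^{−d²/2}·ε ≥ 1 − e^{−d²/2}, where ε = μ0(A). -/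

import Mathlib

/-!
Part (i) is Pinsker's inequality. For `μ ≪ ν` with density `f = dμ/dν`, the elementary bound
`3 (x - 1)² ≤ (2x + 4)(x log x - x + 1)` and AM–GM give, for every `d > 0`,
`|f - 1| ≤ d (2f + 4) / 12 + (f log f - f + 1) / d` pointwise; integrating against `ν` yields
`‖f - 1‖₁ ≤ d / 2 + D(μ‖ν) / d ≤ d`, and `2 |μ(B) - ν(B)| ≤ ‖f - 1‖₁` for every measurable `B`.
Part (ii) follows since both relative-entropy classes lie inside the total-variation ball.

For (iii) take `t = e^{-d²/2}` and `μ₁ = t μ0 + (1 - t) δ_{h0}`. As `μ0` has no atom at `h0`,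
`dμ0/dμ₁ = 1/t` holds `μ0`-almost everywhere, so `D(μ0‖μ₁) = d²/2`; by (i) `μ₁` lies in the
total-variation ball, and `μ₁(A) = 1 - t + t ε` because `h0 ∈ A`.
-/

open MeasureTheory Real Filter

open scoped Classical in
/-- Kullback–Leibler divergence `D(μ‖ν)` between measures, valued in `EReal`:
infinite unless `μ ≪ ν` and the log-likelihood ratio is `μ`-integrable. -/
noncomputable def klDiv {Ω : Type*} [MeasurableSpace Ω] (μ ν : Measure Ω) : EReal :=
  if μ ≪ ν ∧ Integrable (llr μ ν) μ then ((∫ ω, llr μ ν ω ∂μ : ℝ) : EReal) else ⊤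

/-- Total variation distance `TV(μ,ν) = sup_A |μ(A) − ν(A)|` (so `2·TV` is the `L1`
distance between densities when they exist). -/
noncomputable def tvDist {Ω : Type*} [MeasurableSpace Ω] (μ ν : Measure Ω) : ℝ :=
  ⨆ A : {A : Set Ω // MeasurableSet A}, |(μ A.1).toReal - (ν A.1).toReal|

open Set
open InformationTheory (klFun)

lemma monotoneOn_add_one_mul_log_sub_two_mul :
    MonotoneOn (fun x : ℝ => (x + 1) * log x - 2 * (x - 1)) (Ioi 0) := by
  have hderiv : ∀ x ∈ Ioi (0 : ℝ), HasDerivAt (fun x : ℝ => (x + 1) * log x - 2 * (x - 1))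
      (log x + x⁻¹ - 1) x := by
    intro x hx
    have : x ≠ 0 := ne_of_gt hx
    refine ((((hasDerivAt_id x).add_const 1).mul (hasDerivAt_log this)).sub
      (((hasDerivAt_id x).sub_const 1).const_mul 2)).congr_deriv ?_
    simp only [id]
    field_simp
    ring
  refine monotoneOn_of_hasDerivWithinAt_nonneg (convex_Ioi 0)
    (fun x hx => (hderiv x hx).continuousAt.continuousWithinAt)
    (fun x hx => (hderiv x (interior_subset hx)).hasDerivWithinAt) fun x hx => ?_
  linarith [one_sub_inv_le_log_of_pos (interior_subset hx : x ∈ Ioi 0)]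

lemma three_mul_sq_sub_one_le_mul_klFun {x : ℝ} (hx : 0 ≤ x) :
    3 * (x - 1) ^ 2 ≤ (2 * x + 4) * klFun x := by
  set g : ℝ → ℝ := fun x => (2 * x + 4) * klFun x - 3 * (x - 1) ^ 2
  have hg : Continuous g := by have := InformationTheory.continuous_klFun; fun_prop
  have hderiv : ∀ x, 0 < x → HasDerivAt g (4 * ((x + 1) * log x - 2 * (x - 1))) x := by
    intro x hx
    refine ((((hasDerivAt_id x).const_mul 2).add_const 4).mul
      (InformationTheory.hasDerivAt_klFun hx.ne') |>.sub
      (((hasDerivAt_id x).sub_const 1).pow 2 |>.const_mul 3)).congr_deriv ?_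
    simp only [InformationTheory.klFun_apply, id]
    ring
  -- `g' = 4φ` with `φ x = (x + 1) log x - 2 (x - 1)` increasing and `φ 1 = 0`,
  -- so `g` decreases to its zero at `1`, then increases
  have hφ := monotoneOn_add_one_mul_log_sub_two_mul
  suffices 0 ≤ g x by simpa [g] using this
  rcases le_total 1 x with h1x | hx1
  · have : MonotoneOn g (Ici 1) := by
      refine monotoneOn_of_hasDerivWithinAt_nonneg (convex_Ici 1) hg.continuousOn
        (fun y hy => (hderiv y ?_).hasDerivWithinAt) fun y hy => ?_
      all_goals rw [interior_Ici] at hy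
      · exact zero_lt_one.trans hy
      · have := hφ (mem_Ioi.2 one_pos) (mem_Ioi.2 (zero_lt_one.trans hy)) hy.le
        norm_num at this
        linarith
    simpa [g, InformationTheory.klFun_one] using this self_mem_Ici h1x h1x
  · have : AntitoneOn g (Icc 0 1) := by
      refine antitoneOn_of_hasDerivWithinAt_nonpos (convex_Icc 0 1) hg.continuousOn
        (fun y hy => (hderiv y ?_).hasDerivWithinAt) fun y hy => ?_
      all_goals rw [interior_Icc] at hy
      · exact hy.1
      · have := hφ (mem_Ioi.2 hy.1) (mem_Ioi.2 one_pos) hy.2.le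
        norm_num at this
        linarith
    simpa [g, InformationTheory.klFun_one] using
      this ⟨hx, hx1⟩ (right_mem_Icc.2 zero_le_one) hx1

lemma abs_sub_one_le_add_klFun_div {x d : ℝ} (hx : 0 ≤ x) (hd : 0 < d) :
    |x - 1| ≤ d / 6 * x + d / 3 + klFun x / d := by
  have hu : 0 < 2 * x + 4 := by linarith
  have key : d / 6 * x + d / 3 + klFun x / d - |x - 1|
      = ((d * (2 * x + 4) - 6 * |x - 1|) ^ 2
        + 12 * ((2 * x + 4) * klFun x - 3 * (x - 1) ^ 2)) / (12 * d * (2 * x + 4)) := by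
    rw [← sq_abs (x - 1)]
    field_simp
    ring
  have := three_mul_sq_sub_one_le_mul_klFun hx
  rw [← sub_nonneg, key]
  positivity

section

variable {Ω : Type*} [MeasurableSpace Ω]

lemma tvDist_comm (μ ν : Measure Ω) : tvDist μ ν = tvDist ν μ := by
  simp only [tvDist, abs_sub_comm]

lemma klDiv_le_coe_iff {μ ν : Measure Ω} {c : ℝ} :
    klDiv μ ν ≤ c ↔ μ ≪ ν ∧ Integrable (llr μ ν) μ ∧ ∫ x, llr μ ν x ∂μ ≤ c := by
  unfold klDiv
  split_ifs with h
  · simp [h]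
  · simp only [top_le_iff, EReal.coe_ne_top, false_iff]
    tauto

lemma klDiv_of_llr_ae_eq_const {μ ν : Measure Ω} [IsProbabilityMeasure μ] (hμν : μ ≪ ν) {c : ℝ}
    (h : llr μ ν =ᵐ[μ] fun _ => c) : klDiv μ ν = c := by
  rw [klDiv, if_pos ⟨hμν, (integrable_const c).congr h.symm⟩, integral_congr_ae h]
  simp

lemma klDiv_self (μ : Measure Ω) [IsProbabilityMeasure μ] : klDiv μ μ = 0 :=
  klDiv_of_llr_ae_eq_const .rfl (llr_self μ)

section Pinsker

variable {μ ν : Measure Ω} [IsProbabilityMeasure μ] [IsProbabilityMeasure ν]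

lemma setIntegral_toReal_rnDeriv_sub_one (hμν : μ ≪ ν) {B : Set Ω} :
    ∫ x in B, ((μ.rnDeriv ν x).toReal - 1) ∂ν = μ.real B - ν.real B := by
  rw [integral_sub Measure.integrable_toReal_rnDeriv.integrableOn (integrable_const 1),
    Measure.setIntegral_toReal_rnDeriv hμν]
  simp

lemma two_mul_abs_measureReal_sub_le (hμν : μ ≪ ν) {B : Set Ω} (hB : MeasurableSet B) :
    2 * |μ.real B - ν.real B| ≤ ∫ x, |(μ.rnDeriv ν x).toReal - 1| ∂ν := by
  have hg : Integrable (fun x => (μ.rnDeriv ν x).toReal - 1) ν :=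
    Measure.integrable_toReal_rnDeriv.sub (integrable_const 1)
  calc 2 * |μ.real B - ν.real B| = |μ.real B - ν.real B| + |μ.real Bᶜ - ν.real Bᶜ| := by
        rw [probReal_compl_eq_one_sub hB, probReal_compl_eq_one_sub hB, ← abs_neg (_ - _)]
        ring_nf
    _ ≤ ∫ x in B, |(μ.rnDeriv ν x).toReal - 1| ∂ν
          + ∫ x in Bᶜ, |(μ.rnDeriv ν x).toReal - 1| ∂ν := by
        rw [← setIntegral_toReal_rnDeriv_sub_one hμν, ← setIntegral_toReal_rnDeriv_sub_one hμν]
        exact add_le_add abs_integral_le_integral_abs abs_integral_le_integral_abs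
    _ = ∫ x, |(μ.rnDeriv ν x).toReal - 1| ∂ν := integral_add_compl hB hg.abs

lemma two_mul_tvDist_le_integral_abs_rnDeriv_sub_one (hμν : μ ≪ ν) :
    2 * tvDist μ ν ≤ ∫ x, |(μ.rnDeriv ν x).toReal - 1| ∂ν := by
  have : tvDist μ ν ≤ (∫ x, |(μ.rnDeriv ν x).toReal - 1| ∂ν) / 2 :=
    Real.iSup_le (fun B => by
      rw [le_div_iff₀ two_pos, mul_comm]
      exact two_mul_abs_measureReal_sub_le hμν B.2)
      (by positivity)
  linarith

lemma integral_abs_rnDeriv_sub_one_le (hμν : μ ≪ ν) (hint : Integrable (llr μ ν) μ) {d : ℝ}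
    (hd : 0 < d) (hD : ∫ x, llr μ ν x ∂μ ≤ d ^ 2 / 2) :
    ∫ x, |(μ.rnDeriv ν x).toReal - 1| ∂ν ≤ d := by
  set f : Ω → ℝ := fun x => (μ.rnDeriv ν x).toReal
  have hf : Integrable f ν := Measure.integrable_toReal_rnDeriv
  have hklFun : Integrable (fun x => klFun (f x)) ν :=
    (InformationTheory.integrable_klFun_rnDeriv_iff hμν).2 hint
  have hklFun_eq : ∫ x, klFun (f x) ∂ν = ∫ x, llr μ ν x ∂μ := by
    rw [InformationTheory.integral_klFun_rnDeriv hμν hint]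
    simp
  have hlin : Integrable (fun x => d / 6 * f x + d / 3) ν :=
    (hf.const_mul _).add (integrable_const _)
  have hD' : (∫ x, llr μ ν x ∂μ) / d ≤ d / 2 := by
    rw [div_le_iff₀ hd]
    linarith
  calc ∫ x, |f x - 1| ∂ν ≤ ∫ x, (d / 6 * f x + d / 3 + klFun (f x) / d) ∂ν :=
        integral_mono (hf.sub (integrable_const 1)).abs
          (hlin.add (hklFun.div_const d))
          fun x => abs_sub_one_le_add_klFun_div ENNReal.toReal_nonneg hd
    _ = d / 6 + d / 3 + (∫ x, llr μ ν x ∂μ) / d := by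
        rw [integral_add hlin (hklFun.div_const d),
          integral_add (hf.const_mul _) (integrable_const _), integral_const_mul, integral_const,
          integral_div, hklFun_eq, Measure.integral_toReal_rnDeriv hμν]
        simp
    _ ≤ d := by linarith

theorem two_mul_tvDist_le_of_klDiv_le {d : ℝ} (hd : 0 < d)
    (h : klDiv μ ν ≤ ((d ^ 2 / 2 : ℝ) : EReal)) : 2 * tvDist μ ν ≤ d := by
  obtain ⟨hμν, hint, hD⟩ := klDiv_le_coe_iff.1 h
  exact (two_mul_tvDist_le_integral_abs_rnDeriv_sub_one hμν).trans
    (integral_abs_rnDeriv_sub_one_le hμν hint hd hD)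

end Pinsker

section AtomMixture

open scoped NNReal ENNReal

variable (μ : Measure Ω) [IsProbabilityMeasure μ] (ω : Ω) {t : ℝ≥0}

lemma isProbabilityMeasure_smul_add_smul_dirac (ht : t ≤ 1) :
    IsProbabilityMeasure (t • μ + (1 - t) • Measure.dirac ω) := by
  constructor
  simp [add_tsub_cancel_of_le (ENNReal.coe_le_one_iff.2 ht)]

lemma toReal_smul_add_smul_dirac_apply (ht : t ≤ 1) {A : Set Ω} (hω : ω ∈ A) :
    ((t • μ + (1 - t) • Measure.dirac ω) A).toReal = t * (μ A).toReal + (1 - t) := by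
  simp only [Measure.add_apply, Measure.smul_apply, Measure.dirac_apply_of_mem hω,
    ENNReal.smul_def, smul_eq_mul, mul_one]
  rw [ENNReal.toReal_add (by finiteness) ENNReal.coe_ne_top, ENNReal.toReal_mul,
    ENNReal.coe_toReal, ENNReal.coe_toReal, NNReal.coe_sub ht, NNReal.coe_one]

variable [MeasurableSingletonClass Ω]

lemma rnDeriv_smul_add_smul_dirac (hω : μ {ω} = 0) (ht : t ≠ 0) :
    μ.rnDeriv (t • μ + (1 - t) • Measure.dirac ω) =ᵐ[μ] fun _ => ((t⁻¹ : ℝ≥0) : ℝ≥0∞) := by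
  have hμω : μ ⟂ₘ Measure.dirac ω := ⟨{ω}, .singleton ω, hω, by simp⟩
  have hac : μ ≪ t • μ := Measure.absolutelyContinuous_smul (ENNReal.coe_ne_zero.2 ht)
  filter_upwards [hac.ae_le
      (Measure.rnDeriv_add_right_of_mutuallySingular (μ := μ)
        ((hμω.smul_nnreal t).symm.smul_nnreal (1 - t)).symm),
    Measure.rnDeriv_smul_right μ μ ht, Measure.rnDeriv_self μ] with x h₁ h₂ h₃
  rw [h₁, h₂, Pi.smul_apply, h₃, ENNReal.smul_def, smul_eq_mul, mul_one]

lemma klDiv_smul_add_smul_dirac (hω : μ {ω} = 0) (ht : t ≠ 0) :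
    klDiv μ (t • μ + (1 - t) • Measure.dirac ω) = (-log (t : ℝ) : ℝ) := by
  have hac : μ ≪ t • μ := Measure.absolutelyContinuous_smul (ENNReal.coe_ne_zero.2 ht)
  refine klDiv_of_llr_ae_eq_const (hac.add_right _) ?_
  filter_upwards [rnDeriv_smul_add_smul_dirac μ ω hω ht] with x hx
  rw [llr, hx, ENNReal.coe_toReal, NNReal.coe_inv, log_inv]

end AtomMixture

noncomputable def compoundOutage (P : Measure Ω → Prop) (A : Set Ω) : ℝ :=
  sSup {p : ℝ | ∃ μ : Measure Ω, IsProbabilityMeasure μ ∧ P μ ∧ p = (μ A).toReal}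

lemma bddAbove_compoundOutage (P : Measure Ω → Prop) (A : Set Ω) :
    BddAbove {p : ℝ | ∃ μ : Measure Ω, IsProbabilityMeasure μ ∧ P μ ∧ p = (μ A).toReal} :=
  ⟨1, by rintro _ ⟨μ, _, _, rfl⟩; exact measureReal_le_one⟩

lemma le_compoundOutage {P : Measure Ω → Prop} (A : Set Ω) {μ : Measure Ω}
    [IsProbabilityMeasure μ] (hμ : P μ) : (μ A).toReal ≤ compoundOutage P A :=
  le_csSup (bddAbove_compoundOutage P A) ⟨μ, ‹_›, hμ, rfl⟩

lemma compoundOutage_mono {P Q : Measure Ω → Prop} (A : Set Ω)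
    (hP : ∃ μ, IsProbabilityMeasure μ ∧ P μ) (hPQ : ∀ μ, IsProbabilityMeasure μ → P μ → Q μ) :
    compoundOutage P A ≤ compoundOutage Q A := by
  obtain ⟨μ, hμ, hPμ⟩ := hP
  exact csSup_le_csSup (bddAbove_compoundOutage Q A) ⟨_, μ, hμ, hPμ, rfl⟩
    fun _ ⟨ν, hν, hPν, hp⟩ => ⟨ν, hν, hPQ ν hν hPν, hp⟩

end

theorem stmt_19_general {Ω : Type*} [MeasurableSpace Ω] [MeasurableSingletonClass Ω]
    (μ0 : Measure Ω) [IsProbabilityMeasure μ0] (A : Set Ω)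
    (d : ℝ) (hd : 0 < d) (h0 : Ω) (hh0 : h0 ∈ A) (hsing : μ0 {h0} = 0) :
    (∀ μ : Measure Ω, IsProbabilityMeasure μ →
      (klDiv μ0 μ ≤ ((d ^ 2 / 2 : ℝ) : EReal) → 2 * tvDist μ μ0 ≤ d) ∧
      (klDiv μ μ0 ≤ ((d ^ 2 / 2 : ℝ) : EReal) → 2 * tvDist μ μ0 ≤ d)) ∧
    max (sSup {p : ℝ | ∃ μ : Measure Ω, IsProbabilityMeasure μ ∧
          klDiv μ μ0 ≤ ((d ^ 2 / 2 : ℝ) : EReal) ∧ p = (μ A).toReal})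
        (sSup {p : ℝ | ∃ μ : Measure Ω, IsProbabilityMeasure μ ∧
          klDiv μ0 μ ≤ ((d ^ 2 / 2 : ℝ) : EReal) ∧ p = (μ A).toReal})
      ≤ sSup {p : ℝ | ∃ μ : Measure Ω, IsProbabilityMeasure μ ∧
          2 * tvDist μ μ0 ≤ d ∧ p = (μ A).toReal} ∧
    1 - Real.exp (-(d ^ 2 / 2)) + Real.exp (-(d ^ 2 / 2)) * (μ0 A).toReal
      ≤ sSup {p : ℝ | ∃ μ : Measure Ω, IsProbabilityMeasure μ ∧
          2 * tvDist μ μ0 ≤ d ∧ p = (μ A).toReal} ∧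
    1 - Real.exp (-(d ^ 2 / 2))
      ≤ 1 - Real.exp (-(d ^ 2 / 2)) + Real.exp (-(d ^ 2 / 2)) * (μ0 A).toReal := by
  have pinsker : ∀ μ : Measure Ω, IsProbabilityMeasure μ →
      (klDiv μ0 μ ≤ ((d ^ 2 / 2 : ℝ) : EReal) → 2 * tvDist μ μ0 ≤ d) ∧
      (klDiv μ μ0 ≤ ((d ^ 2 / 2 : ℝ) : EReal) → 2 * tvDist μ μ0 ≤ d) := fun μ _ =>
    ⟨fun h => tvDist_comm μ0 μ ▸ two_mul_tvDist_le_of_klDiv_le hd h,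
      two_mul_tvDist_le_of_klDiv_le hd⟩
  have hμ0 : klDiv μ0 μ0 ≤ ((d ^ 2 / 2 : ℝ) : EReal) := by
    rw [klDiv_self]
    exact_mod_cast (by positivity : 0 ≤ d ^ 2 / 2)
  set t : NNReal := ⟨exp (-(d ^ 2 / 2)), (exp_pos _).le⟩
  have ht : (t : ℝ) = exp (-(d ^ 2 / 2)) := rfl
  have ht0 : t ≠ 0 := ne_of_gt (exp_pos _)
  have ht1 : t ≤ 1 := exp_le_one_iff.2 (by nlinarith)
  set μ₁ := t • μ0 + (1 - t) • Measure.dirac h0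
  have hμ₁_prob := isProbabilityMeasure_smul_add_smul_dirac μ0 h0 ht1
  have hμ₁ : klDiv μ0 μ₁ ≤ ((d ^ 2 / 2 : ℝ) : EReal) := by
    rw [klDiv_smul_add_smul_dirac μ0 h0 hsing ht0, ht, log_exp, neg_neg]
  refine ⟨pinsker,
    max_le (compoundOutage_mono A ⟨μ0, inferInstance, hμ0⟩ fun μ hμ => (pinsker μ hμ).2)
      (compoundOutage_mono A ⟨μ0, inferInstance, hμ0⟩ fun μ hμ => (pinsker μ hμ).1), ?_, ?_⟩
  · calc 1 - t + t * (μ0 A).toReal = (μ₁ A).toReal := by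
          rw [toReal_smul_add_smul_dirac_apply μ0 h0 ht1 hh0]
          ring
      _ ≤ compoundOutage (fun μ => 2 * tvDist μ μ0 ≤ d) A :=
          le_compoundOutage A ((pinsker μ₁ hμ₁_prob).1 hμ₁)
  · have := mul_nonneg (exp_pos (-(d ^ 2 / 2))).le (μ0 A).toReal_nonneg
    linarith

/-- Proposition 12 (L1/total-variation uncertainty class): (i) Pinsker's inequality in both
orders; (ii) `P₁ = sup{μ(A) : 2·TV(μ,μ0) ≤ d}` dominates both relative-entropy compound
outages at radius `d²/2`; (iii) `P₁ ≥ 1 − e^{−d²/2} + e^{−d²/2}·ε ≥ 1 − e^{−d²/2}`. -/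
theorem stmt_19 {Ω : Type*} [MeasurableSpace Ω] [MeasurableSingletonClass Ω]
    (μ0 : Measure Ω) [IsProbabilityMeasure μ0] (A : Set Ω) (hA : MeasurableSet A)
    (d : ℝ) (hd : 0 < d) (h0 : Ω) (hh0 : h0 ∈ A) (hsing : μ0 {h0} = 0) :
    (∀ μ : Measure Ω, IsProbabilityMeasure μ →
      (klDiv μ0 μ ≤ ((d ^ 2 / 2 : ℝ) : EReal) → 2 * tvDist μ μ0 ≤ d) ∧
      (klDiv μ μ0 ≤ ((d ^ 2 / 2 : ℝ) : EReal) → 2 * tvDist μ μ0 ≤ d)) ∧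
    max (sSup {p : ℝ | ∃ μ : Measure Ω, IsProbabilityMeasure μ ∧
          klDiv μ μ0 ≤ ((d ^ 2 / 2 : ℝ) : EReal) ∧ p = (μ A).toReal})
        (sSup {p : ℝ | ∃ μ : Measure Ω, IsProbabilityMeasure μ ∧
          klDiv μ0 μ ≤ ((d ^ 2 / 2 : ℝ) : EReal) ∧ p = (μ A).toReal})
      ≤ sSup {p : ℝ | ∃ μ : Measure Ω, IsProbabilityMeasure μ ∧
          2 * tvDist μ μ0 ≤ d ∧ p = (μ A).toReal} ∧
    1 - Real.exp (-(d ^ 2 / 2)) + Real.exp (-(d ^ 2 / 2)) * (μ0 A).toReal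
      ≤ sSup {p : ℝ | ∃ μ : Measure Ω, IsProbabilityMeasure μ ∧
          2 * tvDist μ μ0 ≤ d ∧ p = (μ A).toReal} ∧
    1 - Real.exp (-(d ^ 2 / 2))
      ≤ 1 - Real.exp (-(d ^ 2 / 2)) + Real.exp (-(d ^ 2 / 2)) * (μ0 A).toReal :=
  stmt_19_general μ0 A d hd h0 hh0 hsing
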